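/- arXiv:1912.12230 — 2 statements merged into one kernel-verified Lean document; each statement's English description precedes it below -/
import Mathlib

section
/- In a 2-connected graph, any two longest cycles intersect in at least two vertices. -/
open SimpleGraph

/-- A cycle of maximum length among all cycles of `G`. -/
def IsLongestCycle {V : Type} (G : SimpleGraph V) {v : V} (c : G.Walk v v) : Prop :=
  c.IsCycle ∧ ∀ (w : V) (d : G.Walk w w), d.IsCycle → d.length ≤ c.length
/-- `G` is 2-connected. -/
def TwoConnected {V : Type} [Fintype V] (G : SimpleGraph V) : Prop :=
  3 ≤ Fintype.card V ∧ ∀ v : V, ((⊤ : G.Subgraph).deleteVerts {v}).coe.Connected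

/-!
If two longest cycles `C` and `D` met in at most one vertex, 2-connectivity would give two
disjoint `C`–`D` paths `P` and `Q`, each meeting `C` and `D` only in its ends: if `C` and `D`
share a vertex `v`, take `P` trivial at `v` and for `Q` any `C`–`D` path avoiding `v`; if they are
disjoint, use Menger's theorem for two paths. The longer arc of `C` between the ends of `P` and
`Q`, then `P`, the longer arc of `D`, and `Q` back form a cycle of length at least
`|C|/2 + |D|/2 + |P| + |Q| > |C|`.
-/

namespace SimpleGraph

open Walk

variable {V : Type*} {G : SimpleGraph V}

theorem Walk.IsPath.start_notMem_support_tail {u v : V} {p : G.Walk u v} (hp : p.IsPath) :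
    u ∉ p.support.tail := by
  have := hp.support_nodup
  rw [← cons_tail_support] at this
  exact (List.nodup_cons.mp this).1

theorem Walk.IsPath.append {u v w : V} {p : G.Walk u v} {q : G.Walk v w} (hp : p.IsPath)
    (hq : q.IsPath) (h : ∀ z ∈ p.support, z ∈ q.support → z = v) : (p.append q).IsPath := by
  refine IsPath.mk' ?_
  rw [support_append, List.nodup_append]
  refine ⟨hp.support_nodup, hq.support_nodup.sublist (List.tail_sublist _), ?_⟩
  rintro z hzp _ hzq rfl
  exact hq.start_notMem_support_tail (h z hzp (List.mem_of_mem_tail hzq) ▸ hzq)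

theorem Walk.IsCycle.exists_mem_support_ne {u : V} {C : G.Walk u u} (hC : C.IsCycle) (v : V) :
    ∃ a ∈ C.support, a ≠ v := by
  by_cases huv : u = v
  · exact ⟨C.snd, C.getVert_mem_support 1, huv ▸ (C.adj_snd hC.not_nil).ne.symm⟩
  · exact ⟨u, C.start_mem_support, huv⟩

theorem exists_walk_notMem_support {v : V}
    (hG : ((⊤ : G.Subgraph).deleteVerts {v}).coe.Connected) {a b : V} (ha : a ≠ v)
    (hb : b ≠ v) : ∃ W : G.Walk a b, v ∉ W.support := by
  obtain ⟨W⟩ := hG ⟨a, by simp [ha]⟩ ⟨b, by simp [hb]⟩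
  refine ⟨W.map (Subgraph.hom _), fun hv => ?_⟩
  replace hv : v ∈ (W.map ((⊤ : G.Subgraph).deleteVerts {v}).hom).support := hv
  rw [Walk.support_map, List.mem_map] at hv
  obtain ⟨⟨z, hz⟩, -, hzv⟩ := hv
  simp only [Subgraph.deleteVerts_verts, Subgraph.verts_top, Set.mem_sdiff,
    Set.mem_singleton_iff] at hz
  exact hz.2 hzv

def Separates (G : SimpleGraph V) (A B : Set V) (S : Finset V) : Prop :=
  ∀ ⦃a b : V⦄, a ∈ A → b ∈ B → ∀ W : G.Walk a b, ∃ z ∈ W.support, z ∈ S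

def HasTwoDisjointWalks (G : SimpleGraph V) (A B : Set V) : Prop :=
  ∃ (a b a' b' : V) (W : G.Walk a b) (W' : G.Walk a' b'),
    a ∈ A ∧ b ∈ B ∧ a' ∈ A ∧ b' ∈ B ∧ W.support.Disjoint W'.support

variable {A B : Set V}

theorem Separates.symm {S : Finset V} (h : G.Separates A B S) : G.Separates B A S :=
  fun _ _ hb ha W => by simpa using h ha hb W.reverse

theorem HasTwoDisjointWalks.symm (h : G.HasTwoDisjointWalks A B) : G.HasTwoDisjointWalks B A := by
  obtain ⟨a, b, a', b', W, W', ha, hb, ha', hb', hd⟩ := h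
  exact ⟨b, a, b', a', W.reverse, W'.reverse, hb, ha, hb', ha', by simpa using hd⟩

theorem HasTwoDisjointWalks.mono {G' : SimpleGraph V} (hle : G ≤ G')
    (h : G.HasTwoDisjointWalks A B) : G'.HasTwoDisjointWalks A B := by
  obtain ⟨a, b, a', b', W, W', ha, hb, ha', hb', hd⟩ := h
  exact ⟨a, b, a', b', W.mapLe hle, W'.mapLe hle, ha, hb, ha', hb', by
    simpa [Walk.support_mapLe_eq_support] using hd⟩

theorem two_le_card_of_separates [Nonempty V]
    (hG : ∀ v : V, ((⊤ : G.Subgraph).deleteVerts {v}).coe.Connected)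
    (hA : ∀ v, ∃ a ∈ A, a ≠ v) (hB : ∀ v, ∃ b ∈ B, b ≠ v) {S : Finset V}
    (hS : G.Separates A B S) : 2 ≤ S.card := by
  by_contra! hlt
  obtain ⟨v, hv⟩ := Finset.card_le_one_iff_subset_singleton.mp (by omega : S.card ≤ 1)
  obtain ⟨a, ha, hav⟩ := hA v
  obtain ⟨b, hb, hbv⟩ := hB v
  obtain ⟨W, hW⟩ := exists_walk_notMem_support (hG v) hav hbv
  obtain ⟨z, hzW, hzS⟩ := hS ha hb W
  exact hW (Finset.mem_singleton.mp (hv hzS) ▸ hzW)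

theorem hasTwoDisjointWalks_of_edgeSet_eq_empty [Finite V] (hE : G.edgeSet = ∅)
    (h : ∀ S : Finset V, G.Separates A B S → 2 ≤ S.card) : G.HasTwoDisjointWalks A B := by
  have hAB : G.Separates A B (Set.toFinite (A ∩ B)).toFinset := by
    intro a b ha hb W
    cases W with
    | nil => exact ⟨a, by simp, by simp [ha, hb]⟩
    | cons hadj _ => exact absurd (hE ▸ (show s(_, _) ∈ G.edgeSet from hadj)) (Set.notMem_empty _)
  obtain ⟨a, ha, a', ha', hne⟩ := Finset.one_lt_card.mp (h _ hAB)
  simp only [Set.Finite.mem_toFinset] at ha ha'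
  exact ⟨a, a, a', a', Walk.nil, Walk.nil, ha.1, ha.2, ha'.1, ha'.2, by simpa using hne.symm⟩

variable [DecidableEq V]

theorem Walk.exists_isPath_of_mem_of_mem {a b : V} (W : G.Walk a b) (ha : a ∈ A)
    (hb : b ∈ B) :
    ∃ (s t : V) (P : G.Walk s t), P.IsPath ∧ s ∈ A ∧ t ∈ B ∧ P.support ⊆ W.support ∧
      (∀ z ∈ P.support, z ∈ A → z = s) ∧ (∀ z ∈ P.support, z ∈ B → z = t) := by
  induction hn : W.length using Nat.strong_induction_on generalizing a b with
  | _ n ih =>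
  by_cases hA : ∃ z ∈ W.support, z ∈ A ∧ z ≠ a
  · obtain ⟨z, hzW, hzA, hza⟩ := hA
    obtain ⟨s, t, P, hP, hs, ht, hPW, hPA, hPB⟩ :=
      ih _ (hn ▸ length_dropUntil_lt_length hzW hza) (W.dropUntil z hzW) hzA hb rfl
    exact ⟨s, t, P, hP, hs, ht,
      List.Subset.trans hPW (W.support_dropUntil_subset_support hzW), hPA, hPB⟩
  by_cases hB : ∃ z ∈ W.support, z ∈ B ∧ z ≠ b
  · obtain ⟨z, hzW, hzB, hzb⟩ := hB
    obtain ⟨s, t, P, hP, hs, ht, hPW, hPA, hPB⟩ :=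
      ih _ (hn ▸ length_takeUntil_lt_length hzW hzb) (W.takeUntil z hzW) ha hzB rfl
    exact ⟨s, t, P, hP, hs, ht,
      List.Subset.trans hPW (W.support_takeUntil_subset_support hzW), hPA, hPB⟩
  push Not at hA hB
  have hsub := W.support_bypass_subset_support
  exact ⟨a, b, W.bypass, W.bypass_isPath, ha, hb, hsub,
    fun z hz => hA z (hsub hz), fun z hz => hB z (hsub hz)⟩

/-- A common vertex would give an `A`–`B` walk through neither `x` nor `y`, as a path passes its
end only once. -/
theorem Separates.disjoint_support_of_isPath {x y a b : V} (hS : G.Separates A B {x, y})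
    (ha : a ∈ A) (hb : b ∈ B) {P : G.Walk a x} {Q : G.Walk b y} (hP : P.IsPath) (hQ : Q.IsPath)
    (hyP : y ∉ P.support) (hxQ : x ∉ Q.support) : P.support.Disjoint Q.support := by
  intro z hzP hzQ
  obtain ⟨w, hw, hwS⟩ := hS ha hb ((P.takeUntil z hzP).append (Q.takeUntil z hzQ).reverse)
  rw [mem_support_append_iff, support_reverse, List.mem_reverse] at hw
  rcases Finset.mem_insert.mp hwS with rfl | hwy
  · rcases hw with hw | hw
    · exact endpoint_notMem_support_takeUntil hP hzP (by rintro rfl; exact hxQ hzQ) hw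
    · exact hxQ (Q.support_takeUntil_subset_support hzQ hw)
  · rw [Finset.mem_singleton] at hwy
    subst hwy
    rcases hw with hw | hw
    · exact hyP (P.support_takeUntil_subset_support hzP hw)
    · exact endpoint_notMem_support_takeUntil hQ hzQ (by rintro rfl; exact hyP hzP) hw

theorem HasTwoDisjointWalks.exists_isPath_pair {x y : V} (h : G.HasTwoDisjointWalks A {x, y}) :
    ∃ (a a' : V) (P : G.Walk a x) (P' : G.Walk a' y), a ∈ A ∧ a' ∈ A ∧ P.IsPath ∧ P'.IsPath ∧
      y ∉ P.support ∧ x ∉ P'.support ∧ P.support.Disjoint P'.support := by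
  obtain ⟨a, b, a', b', W, W', ha, hb, ha', hb', hd⟩ := h
  obtain ⟨s, t, P, hP, hs, ht, hPW, -, hPxy⟩ := W.exists_isPath_of_mem_of_mem ha hb
  obtain ⟨s', t', P', hP', hs', ht', hPW', -, hPxy'⟩ := W'.exists_isPath_of_mem_of_mem ha' hb'
  have hPP' : P.support.Disjoint P'.support := fun z h h' => hd (hPW h) (hPW' h')
  have htt' : t ≠ t' := fun h => hPP' P.end_mem_support (h ▸ P'.end_mem_support)
  have hy : y ∈ ({x, y} : Set V) := by simp
  have hx : x ∈ ({x, y} : Set V) := by simp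
  rcases ht with rfl | rfl <;> rcases ht' with rfl | rfl
  · exact absurd rfl htt'
  · exact ⟨s, s', P, P', hs, hs', hP, hP', fun h => htt' (hPxy _ h hy).symm,
      fun h => htt' (hPxy' _ h hx), hPP'⟩
  · exact ⟨s', s, P', P, hs', hs, hP', hP, fun h => htt' (hPxy' _ h hy),
      fun h => htt' (hPxy _ h hx).symm, hPP'.symm⟩
  · exact absurd rfl htt'

theorem HasTwoDisjointWalks.trans_of_separates_pair {x y : V} (hS : G.Separates A B {x, y})
    (hA : G.HasTwoDisjointWalks A {x, y}) (hB : G.HasTwoDisjointWalks {x, y} B) :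
    G.HasTwoDisjointWalks A B := by
  obtain ⟨a, a', P, P', ha, ha', hP, hP', hyP, hxP', hPP'⟩ := hA.exists_isPath_pair
  obtain ⟨b, b', Q, Q', hb, hb', hQ, hQ', hyQ, hxQ', hQQ'⟩ := hB.symm.exists_isPath_pair
  have hPQ' := hS.disjoint_support_of_isPath ha hb' hP hQ' hyP hxQ'
  have hP'Q := (Finset.pair_comm x y ▸ hS).disjoint_support_of_isPath ha' hb hP' hQ hxP' hyQ
  refine ⟨a, b, a', b', P.append Q.reverse, P'.append Q'.reverse, ha, hb, ha', hb', ?_⟩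
  intro z hz hz'
  simp only [Walk.mem_support_append_iff, Walk.support_reverse, List.mem_reverse] at hz hz'
  rcases hz with hz | hz <;> rcases hz' with hz' | hz'
  exacts [hPP' hz hz', hPQ' hz hz', hP'Q hz' hz, hQQ' hz hz']

theorem Separates.of_deleteEdges_pair {x y : V} {T : Finset V} (hS : G.Separates A B {x, y})
    (hT : (G.deleteEdges {s(x, y)}).Separates A {x, y} T) : G.Separates A B T := by
  intro a b ha hb W
  obtain ⟨z, hzW, hz⟩ := hS ha hb W
  obtain ⟨s, t, P, -, hs, ht, hPW, -, hPxy⟩ :=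
    (W.takeUntil z hzW).exists_isPath_of_mem_of_mem (B := {x, y}) ha (by simpa using hz)
  have hP : ∀ e ∈ P.edges, e ∈ (G.deleteEdges {s(x, y)}).edgeSet := by
    intro e he
    rw [edgeSet_deleteEdges]
    refine ⟨P.edges_subset_edgeSet he, ?_⟩
    rintro rfl
    have hxy := (P.adj_of_mem_edges he).ne
    exact hxy ((hPxy x (P.fst_mem_support_of_mem_edges he) (by simp)).trans
      (hPxy y (P.snd_mem_support_of_mem_edges he) (by simp)).symm)
  obtain ⟨w, hwP, hwT⟩ := hT hs ht (P.transfer _ hP)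
  rw [Walk.support_transfer] at hwP
  exact ⟨w, W.support_takeUntil_subset_support hzW (hPW hwP), hwT⟩

section Contraction

/-- Contract the edge `xy` onto `x`; the vertex `y` stays behind, isolated. -/
def contractEdge (G : SimpleGraph V) (x y : V) : SimpleGraph V :=
  fromEdgeSet (Sym2.map (Function.update id y x) '' G.edgeSet)

variable {x y : V}

theorem contractEdge_adj {u v : V} : (G.contractEdge x y).Adj u v ↔
    u ≠ v ∧ ∃ a b, G.Adj a b ∧ Function.update id y x a = u ∧ Function.update id y x b = v := by
  simp only [contractEdge, fromEdgeSet_adj, Set.mem_image]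
  constructor
  · rintro ⟨⟨e, he, hmap⟩, huv⟩
    induction e using Sym2.ind with | _ a b => ?_
    rw [Sym2.map_mk, Sym2.eq_iff] at hmap
    rcases hmap with ⟨rfl, rfl⟩ | ⟨rfl, rfl⟩
    exacts [⟨huv, a, b, he, rfl, rfl⟩, ⟨huv, b, a, he.symm, rfl, rfl⟩]
  · rintro ⟨huv, a, b, hab, rfl, rfl⟩
    exact ⟨⟨s(a, b), hab, rfl⟩, huv⟩

theorem update_id_ne (hxy : x ≠ y) (a : V) : Function.update id y x a ≠ y := by
  intro h
  by_cases ha : a = y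
  · subst ha
    exact hxy (by simpa using h)
  · exact ha (by simpa [Function.update_of_ne ha] using h)

theorem not_contractEdge_adj_right (hxy : x ≠ y) (u : V) : ¬ (G.contractEdge x y).Adj u y := by
  rw [contractEdge_adj]
  rintro ⟨-, -, b, -, -, hb⟩
  exact update_id_ne hxy b hb

theorem ncard_edgeSet_contractEdge_lt [Finite V] (hxy : G.Adj x y) :
    (G.contractEdge x y).edgeSet.ncard < G.edgeSet.ncard := by
  have hsub : (G.contractEdge x y).edgeSet ⊆
      Sym2.map (Function.update id y x) '' (G.edgeSet \ {s(x, y)}) := by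
    rw [contractEdge, edgeSet_fromEdgeSet]
    rintro _ ⟨⟨e, he, rfl⟩, hdiag⟩
    refine ⟨e, ⟨he, ?_⟩, rfl⟩
    rintro rfl
    simp [Sym2.map_mk, Function.update_self, Function.update_of_ne hxy.ne] at hdiag
  calc (G.contractEdge x y).edgeSet.ncard
      ≤ (G.edgeSet \ {s(x, y)}).ncard := (Set.ncard_le_ncard hsub).trans (Set.ncard_image_le)
    _ < G.edgeSet.ncard := Set.ncard_sdiff_singleton_lt_of_mem hxy

theorem Walk.exists_contractEdge_walk {a b : V} (W : G.Walk a b) :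
    ∃ W' : (G.contractEdge x y).Walk (Function.update id y x a) (Function.update id y x b),
      W'.support ⊆ W.support.map (Function.update id y x) := by
  induction W with
  | nil => exact ⟨Walk.nil, by simp⟩
  | @cons a c b hac W ih =>
    obtain ⟨W', hW'⟩ := ih
    by_cases h : Function.update id y x a = Function.update id y x c
    · exact ⟨W'.copy h.symm rfl, by
        simpa using List.Subset.trans hW' (List.subset_cons_self _ _)⟩
    · refine ⟨Walk.cons (contractEdge_adj.mpr ⟨h, a, c, hac, rfl, rfl⟩) W', ?_⟩
      simpa using List.cons_subset_cons _ hW'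

theorem exists_walk_update_id (hxy : G.Adj x y) (a : V) :
    ∃ p : G.Walk a (Function.update id y x a), ∀ {L : List V}, Function.update id y x a ∈ L →
      ∀ z ∈ p.support, z ∈ L ∨ (z = y ∧ x ∈ L) := by
  by_cases ha : a = y
  · subst ha
    refine ⟨(Walk.cons hxy.symm Walk.nil).copy rfl (by simp), fun hL z hz => ?_⟩
    simp only [Function.update_self] at hL
    simp only [Walk.support_copy, Walk.support_cons, Walk.support_nil, List.mem_cons,
      List.not_mem_nil, or_false] at hz
    rcases hz with rfl | rfl
    exacts [Or.inr ⟨rfl, hL⟩, Or.inl hL]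
  · refine ⟨Walk.nil.copy rfl (by simp [Function.update_of_ne ha]), fun hL z hz => ?_⟩
    simp only [Function.update_of_ne ha, id] at hL
    simp only [Walk.support_copy, Walk.support_nil, List.mem_singleton] at hz
    exact Or.inl (hz ▸ hL)

theorem Walk.exists_lift_of_contractEdge (hxy : G.Adj x y) {u v : V}
    (W' : (G.contractEdge x y).Walk u v) :
    ∃ W : G.Walk u v, ∀ z ∈ W.support, z ∈ W'.support ∨ (z = y ∧ x ∈ W'.support) := by
  induction W' with
  | nil => exact ⟨Walk.nil, by simp⟩
  | @cons u w v huw W' ih =>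
    obtain ⟨W, hW⟩ := ih
    obtain ⟨-, a, b, hab, rfl, rfl⟩ := contractEdge_adj.mp huw
    obtain ⟨pa, hpa⟩ := exists_walk_update_id hxy a
    obtain ⟨pb, hpb⟩ := exists_walk_update_id hxy b
    refine ⟨pa.reverse.append (Walk.cons hab (pb.append W)), fun z hz => ?_⟩
    simp only [mem_support_append_iff, support_reverse, List.mem_reverse, support_cons,
      List.mem_cons] at hz
    rcases hz with hz | rfl | hz | hz
    · exact hpa (by simp) z hz
    · exact hpa (by simp) z pa.start_mem_support
    · exact hpb (by simp) z hz
    · rcases hW z hz with h | ⟨rfl, h⟩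
      exacts [Or.inl (by simp [h]), Or.inr ⟨rfl, by simp [h]⟩]

theorem Walk.exists_lift_update_id_of_contractEdge (hxy : G.Adj x y) {a b : V}
    (W' : (G.contractEdge x y).Walk (Function.update id y x a) (Function.update id y x b)) :
    ∃ W : G.Walk a b, ∀ z ∈ W.support, z ∈ W'.support ∨ (z = y ∧ x ∈ W'.support) := by
  obtain ⟨W, hW⟩ := W'.exists_lift_of_contractEdge hxy
  obtain ⟨pa, hpa⟩ := exists_walk_update_id hxy a
  obtain ⟨pb, hpb⟩ := exists_walk_update_id hxy b
  refine ⟨pa.append (W.append pb.reverse), fun z hz => ?_⟩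
  simp only [mem_support_append_iff, support_reverse, List.mem_reverse] at hz
  rcases hz with hz | hz | hz
  · exact hpa W'.start_mem_support z hz
  · exact hW z hz
  · exact hpb W'.end_mem_support z hz

theorem Walk.notMem_support_contractEdge (hxy : x ≠ y) {u v : V}
    (W : (G.contractEdge x y).Walk u v) (hu : u ≠ y) : y ∉ W.support := by
  intro hy
  have hne : ¬ (W.takeUntil y hy).Nil := Walk.not_nil_of_ne hu
  exact not_contractEdge_adj_right hxy _ ((W.takeUntil y hy).adj_penultimate hne)

theorem Separates.of_contractEdge {S T : Finset V}
    (hS : (G.contractEdge x y).Separates (Function.update id y x '' A)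
      (Function.update id y x '' B) S)
    (hST : ∀ u, Function.update id y x u ∈ S → u ∈ T) : G.Separates A B T := by
  intro a b ha hb W
  obtain ⟨W', hW'⟩ := W.exists_contractEdge_walk (x := x) (y := y)
  obtain ⟨z, hzW', hzS⟩ := hS (Set.mem_image_of_mem _ ha) (Set.mem_image_of_mem _ hb) W'
  obtain ⟨u, huW, rfl⟩ := List.mem_map.mp (hW' hzW')
  exact ⟨u, huW, hST u hzS⟩

/-- A separator of at most one vertex after contracting `xy` must be `{x}`, so `{x, y}` separates
before the contraction. -/
theorem separates_pair_of_contractEdge (hxy : x ≠ y)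
    (h : ∀ T : Finset V, G.Separates A B T → 2 ≤ T.card) {S : Finset V}
    (hS : (G.contractEdge x y).Separates (Function.update id y x '' A)
      (Function.update id y x '' B) S) (hcard : S.card < 2) : G.Separates A B {x, y} := by
  have hSy : G.Separates A B (insert y S) := hS.of_contractEdge fun u hu => by
    by_cases huy : u = y
    · simp [huy]
    · simpa [Function.update_of_ne huy] using Or.inr hu
  have := (h _ hSy).trans (Finset.card_insert_le y S)
  obtain ⟨w, rfl⟩ := Finset.card_eq_one.mp (by omega : S.card = 1)
  by_cases hwx : w = x
  · subst hwx
    exact hS.of_contractEdge fun u hu => by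
      by_cases huy : u = y
      · simp [huy]
      · simp only [Function.update_of_ne huy, id, Finset.mem_singleton] at hu
        simp [hu]
  · have hw : G.Separates A B {w} := hS.of_contractEdge fun u hu => by
      by_cases huy : u = y
      · simp [huy, Ne.symm hwx] at hu
      · simpa [Function.update_of_ne huy] using hu
    simpa using h _ hw

theorem HasTwoDisjointWalks.of_contractEdge (hxy : G.Adj x y)
    (h : (G.contractEdge x y).HasTwoDisjointWalks (Function.update id y x '' A)
      (Function.update id y x '' B)) : G.HasTwoDisjointWalks A B := by
  obtain ⟨-, -, -, -, W, W', ⟨a, ha, rfl⟩, ⟨b, hb, rfl⟩, ⟨a', ha', rfl⟩, ⟨b', hb', rfl⟩, hd⟩ := h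
  wlog hx : x ∉ W'.support generalizing a b a' b'
  · exact this a' ha' b' hb' W' a ha b hb W hd.symm fun h => hd h (not_not.mp hx)
  have hy' : y ∉ W'.support :=
    W'.notMem_support_contractEdge hxy.ne (update_id_ne hxy.ne a')
  obtain ⟨L₁, hL₁⟩ := W.exists_lift_update_id_of_contractEdge hxy
  obtain ⟨L₂, hL₂⟩ := W'.exists_lift_update_id_of_contractEdge hxy
  refine ⟨a, b, a', b', L₁, L₂, ha, hb, ha', hb', fun z hz₁ hz₂ => ?_⟩
  have hz₂' : z ∈ W'.support := (hL₂ z hz₂).resolve_right fun h => hx h.2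
  rcases hL₁ z hz₁ with hz₁' | ⟨rfl, -⟩
  exacts [hd hz₁' hz₂', hy' hz₂']

end Contraction

/-- Menger's theorem for two paths, by induction on the number of edges: contract an edge `xy`;
if the contraction has a separator of at most one vertex, then `{x, y}` separates `A` from `B`,
and the two halves are linked separately in `G` minus the edge. -/
theorem hasTwoDisjointWalks_of_forall_separates [Finite V]
    (h : ∀ S : Finset V, G.Separates A B S → 2 ≤ S.card) : G.HasTwoDisjointWalks A B := by
  induction hn : G.edgeSet.ncard using Nat.strong_induction_on generalizing G A B with
  | _ n ih =>
  rcases G.edgeSet.eq_empty_or_nonempty with hE | ⟨e, he⟩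
  · exact hasTwoDisjointWalks_of_edgeSet_eq_empty hE h
  induction e using Sym2.ind with | _ x y => ?_
  have hxy : G.Adj x y := he
  by_cases hH : ∀ S : Finset V, (G.contractEdge x y).Separates
      (Function.update id y x '' A) (Function.update id y x '' B) S → 2 ≤ S.card
  · exact (ih _ (hn ▸ ncard_edgeSet_contractEdge_lt hxy) hH rfl).of_contractEdge hxy
  push Not at hH
  obtain ⟨S, hS, hcard⟩ := hH
  have hsep := separates_pair_of_contractEdge hxy.ne h hS hcard
  have hlt : (G.deleteEdges {s(x, y)}).edgeSet.ncard < n := by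
    rw [edgeSet_deleteEdges, ← hn]
    exact Set.ncard_sdiff_singleton_lt_of_mem he
  have hA := ih _ hlt (fun T hT => h T (hsep.of_deleteEdges_pair hT)) rfl
  have hB := ih _ hlt (fun T hT => h T (hsep.symm.of_deleteEdges_pair hT.symm).symm) rfl
  exact (hA.mono (deleteEdges_le _)).trans_of_separates_pair hsep (hB.mono (deleteEdges_le _))

theorem Walk.IsCycle.exists_isPath_length_ge {u x s : V} {C : G.Walk u u} (hC : C.IsCycle)
    (hx : x ∈ C.support) (hs : s ∈ C.support) (hxs : x ≠ s) :
    ∃ p : G.Walk s x, p.IsPath ∧ p.support ⊆ C.support ∧ C.length ≤ 2 * p.length := by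
  have hx' : x ∈ (C.rotate s hs).support := by simpa using hx
  have hspec := (C.rotate s hs).take_spec hx'
  set p := (C.rotate s hs).takeUntil x hx'
  set q := (C.rotate s hs).dropUntil x hx'
  have hlen : p.length + q.length = C.length := by
    rw [← length_append, hspec, length_rotate]
  have hrot : (C.rotate s hs).support ⊆ C.support := fun z hz => by simpa using hz
  by_cases hpq : C.length ≤ 2 * p.length
  · exact ⟨p, (hC.rotate hs).isPath_takeUntil hx',
      List.Subset.trans ((C.rotate s hs).support_takeUntil_subset_support hx') hrot, hpq⟩
  · have hq : q.IsPath :=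
      (hspec ▸ hC.rotate hs : (p.append q).IsCycle).isPath_of_append_right (not_nil_of_ne hxs.symm)
    refine ⟨q.reverse, hq.reverse, ?_, by rw [length_reverse]; omega⟩
    rw [support_reverse]
    exact List.Subset.trans (List.reverse_subset.mpr
      ((C.rotate s hs).support_dropUntil_subset_support hx')) hrot

/-- Two disjoint paths `P`, `Q` joining the cycles `C` and `D` close up, together with the longer
arcs of `C` and `D` between their ends, to a cycle longer than the mean of `C` and `D`. -/
theorem exists_isCycle_length_gt_of_isPath {u w x y s t : V} {C : G.Walk u u} {D : G.Walk w w}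
    (hC : C.IsCycle) (hD : D.IsCycle) {P : G.Walk x y} {Q : G.Walk s t} (hP : P.IsPath)
    (hQ : Q.IsPath) (hxC : x ∈ C.support) (hyD : y ∈ D.support) (hsC : s ∈ C.support)
    (htD : t ∈ D.support) (hPC : ∀ z ∈ P.support, z ∈ C.support → z = x)
    (hPD : ∀ z ∈ P.support, z ∈ D.support → z = y) (hQC : ∀ z ∈ Q.support, z ∈ C.support → z = s)
    (hQD : ∀ z ∈ Q.support, z ∈ D.support → z = t) (hPQ : P.support.Disjoint Q.support)
    (hCD : ∀ z ∈ C.support, z ∈ D.support → z ∈ P.support) :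
    ∃ (z : V) (Z : G.Walk z z), Z.IsCycle ∧ C.length + D.length < 2 * Z.length := by
  have hxs : x ≠ s := fun h => hPQ P.start_mem_support (h ▸ Q.start_mem_support)
  have hyt : y ≠ t := fun h => hPQ P.end_mem_support (h ▸ Q.end_mem_support)
  have hst : s ≠ t := fun h => hPQ (hCD s hsC (h ▸ htD)) Q.start_mem_support
  obtain ⟨pC, hpC, hpCC, hpClen⟩ := hC.exists_isPath_length_ge hxC hsC hxs
  obtain ⟨pD, hpD, hpDD, hpDlen⟩ := hD.exists_isPath_length_ge htD hyD hyt.symm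
  have hPpD : (P.append pD).IsPath :=
    hP.append hpD fun z hz hzD => hPD z hz (hpDD hzD)
  have hR : (pC.append (P.append pD)).IsPath := by
    refine hpC.append hPpD fun z hzC hz => hPC z ?_ (hpCC hzC)
    rcases (mem_support_append_iff _ _).mp hz with hz | hz
    exacts [hz, hCD z (hpCC hzC) (hpDD hz)]
  have hQlen : 0 < Q.length := Nat.pos_of_ne_zero fun h => hst (eq_of_length_eq_zero h)
  have hC3 := hC.three_le_length
  refine ⟨s, _, hR.isCycle_append hQ.reverse ?_ (Or.inl ?_), ?_⟩
  · intro z hzR hzQ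
    have hzQ' : z ∈ Q.support := by simpa using List.mem_of_mem_tail hzQ
    rcases (mem_support_append_iff _ _).mp (List.mem_of_mem_tail hzR) with hz | hz
    · exact hR.start_notMem_support_tail (hQC z hzQ' (hpCC hz) ▸ hzR)
    rcases (mem_support_append_iff _ _).mp hz with hz | hz
    · exact hPQ hz hzQ'
    · exact hQ.reverse.start_notMem_support_tail (hQD z hzQ' (hpDD hz) ▸ hzQ)
  · simp only [length_append]
    omega
  · simp only [length_append, length_reverse]
    omega

theorem exists_isCycle_length_gt_of_disjoint [Finite V]
    (hG : ∀ v : V, ((⊤ : G.Subgraph).deleteVerts {v}).coe.Connected) {u w : V}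
    {C : G.Walk u u} {D : G.Walk w w} (hC : C.IsCycle) (hD : D.IsCycle)
    (hCD : C.support.Disjoint D.support) :
    ∃ (z : V) (Z : G.Walk z z), Z.IsCycle ∧ C.length + D.length < 2 * Z.length := by
  have : Nonempty V := ⟨u⟩
  obtain ⟨a, b, a', b', W, W', ha, hb, ha', hb', hd⟩ :=
    hasTwoDisjointWalks_of_forall_separates (A := {z | z ∈ C.support}) (B := {z | z ∈ D.support})
      fun S hS => two_le_card_of_separates hG hC.exists_mem_support_ne hD.exists_mem_support_ne hS
  obtain ⟨x, y, P, hP, hx, hy, hPW, hPC, hPD⟩ := W.exists_isPath_of_mem_of_mem ha hb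
  obtain ⟨s, t, Q, hQ, hs, ht, hQW, hQC, hQD⟩ := W'.exists_isPath_of_mem_of_mem ha' hb'
  exact exists_isCycle_length_gt_of_isPath hC hD hP hQ hx hy hs ht hPC hPD hQC hQD
    (fun z h h' => hd (hPW h) (hQW h')) fun z hzC hzD => (hCD hzC hzD).elim

theorem exists_isCycle_length_gt_of_mem_support_iff [Finite V]
    (hG : ∀ v : V, ((⊤ : G.Subgraph).deleteVerts {v}).coe.Connected) {u w v : V}
    {C : G.Walk u u} {D : G.Walk w w} (hC : C.IsCycle) (hD : D.IsCycle)
    (hCD : ∀ z, z ∈ C.support ∧ z ∈ D.support ↔ z = v) :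
    ∃ (z : V) (Z : G.Walk z z), Z.IsCycle ∧ C.length + D.length < 2 * Z.length := by
  obtain ⟨hvC, hvD⟩ := (hCD v).mpr rfl
  obtain ⟨a, ha, hav⟩ := hC.exists_mem_support_ne v
  obtain ⟨b, hb, hbv⟩ := hD.exists_mem_support_ne v
  obtain ⟨W, hW⟩ := exists_walk_notMem_support (hG v) hav hbv
  obtain ⟨s, t, Q, hQ, hs, ht, hQW, hQC, hQD⟩ :=
    W.exists_isPath_of_mem_of_mem (A := {z | z ∈ C.support}) (B := {z | z ∈ D.support}) ha hb
  exact exists_isCycle_length_gt_of_isPath hC hD (P := Walk.nil) IsPath.nil hQ hvC hvD hs ht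
    (by simp) (by simp) hQC hQD (by simpa using fun h => hW (hQW h))
    fun z hzC hzD => by simp [(hCD z).mp ⟨hzC, hzD⟩]

end SimpleGraph

/-- In a 2-connected graph, any two longest cycles share at least two vertices. -/
theorem stmt_0 {V : Type} [Fintype V] [DecidableEq V] (G : SimpleGraph V)
    (hG : TwoConnected G) {u w : V} (C : G.Walk u u) (D : G.Walk w w)
    (hC : IsLongestCycle G C) (hD : IsLongestCycle G D) :
    2 ≤ (C.support.toFinset ∩ D.support.toFinset).card := by
  by_contra! hlt
  obtain ⟨z, Z, hZ, hlen⟩ :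
      ∃ (z : V) (Z : G.Walk z z), Z.IsCycle ∧ C.length + D.length < 2 * Z.length := by
    rcases Nat.le_one_iff_eq_zero_or_eq_one.mp (Nat.le_of_lt_succ hlt) with h0 | h1
    · refine exists_isCycle_length_gt_of_disjoint hG.2 hC.1 hD.1 fun z hzC hzD => ?_
      exact Finset.eq_empty_iff_forall_notMem.mp (Finset.card_eq_zero.mp h0) z (by simp [hzC, hzD])
    · obtain ⟨v, hv⟩ := Finset.card_eq_one.mp h1
      exact exists_isCycle_length_gt_of_mem_support_iff hG.2 hC.1 hD.1 fun z => by
        simpa using Finset.ext_iff.mp hv z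
  have := hC.2 z Z hZ
  have := hD.2 z Z hZ
  omega
end

section
/- Let (T, 𝒱) be a tree decomposition of a graph G. Suppose that for every node t of T there is assigned a nonempty set 𝒞(t) of cycles of G, each fenced by V_t and not contained in G[V_t]. Then there exist an edge tt' of T and cycles C ∈ 𝒞(t), D ∈ 𝒞(t') such that all vertices of V(C) \ V_t lie in bags of the component of T − t containing t', and all vertices of V(D) \ V_{t'} lie in bags of the component of T − t' containing t. -/
open SimpleGraph

/-- `S` fences the vertex set `W`: `S` does not separate any two vertices of `W` in `G`. -/
def Fenced {V : Type} (G : SimpleGraph V) (S : Set V) (W : Set V) : Prop :=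
  ∀ u ∈ W, ∀ v ∈ W, u ∉ S → v ∉ S → ∃ p : G.Walk u v, ∀ s ∈ p.support, s ∉ S
/-- A tree decomposition of `G` over the tree `T`. -/
structure TreeDecomp {V ι : Type} (G : SimpleGraph V) (T : SimpleGraph ι) where
  bag : ι → Set V
  covers_vertex : ∀ v : V, ∃ t, v ∈ bag t
  covers_edge : ∀ ⦃u v : V⦄, G.Adj u v → ∃ t, u ∈ bag t ∧ v ∈ bag t
  bag_connected : ∀ (v : V) (t₁ t₂ : ι), v ∈ bag t₁ → v ∈ bag t₂ →
    ∀ p : T.Walk t₁ t₂, p.IsPath → ∀ s ∈ p.support, v ∈ bag s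
/-- Vertex `u` of `G` lies in (a bag of) the component of `T - t` containing `t'`. -/
def InBranch {V ι : Type} {G : SimpleGraph V} (T : SimpleGraph ι) (td : TreeDecomp G T)
    (t t' : ι) (u : V) : Prop :=
  ∃ s : ι, u ∈ td.bag s ∧ ∃ p : T.Walk t' s, t ∉ p.support

/-- If `u` lies in two bags and not in the bag of `t`, then the two bags are in the same
component of `T - t`. -/
lemma avoidA {V ι : Type} {G : SimpleGraph V} {T : SimpleGraph ι} (hT : T.IsTree)
    (td : TreeDecomp G T) {t s₁ s₂ : ι} {u : V}
    (h1 : u ∈ td.bag s₁) (h2 : u ∈ td.bag s₂) (hu : u ∉ td.bag t) :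
    ∃ p : T.Walk s₁ s₂, t ∉ p.support := by
  classical
  obtain ⟨w⟩ := hT.isConnected.preconnected s₁ s₂
  exact ⟨w.toPath.1, fun ht =>
    hu (td.bag_connected u s₁ s₂ h1 h2 w.toPath.1 w.toPath.2 t ht)⟩

/-- If a `G`-walk avoids the bag of `t`, then bags containing its endpoints are in the same
component of `T - t`. -/
lemma avoidC {V ι : Type} {G : SimpleGraph V} {T : SimpleGraph ι} (hT : T.IsTree)
    (td : TreeDecomp G T) (t : ι) {a b : V} (w : G.Walk a b)
    (hs : ∀ x ∈ w.support, x ∉ td.bag t) {s₁ s₂ : ι}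
    (h1 : a ∈ td.bag s₁) (h2 : b ∈ td.bag s₂) : ∃ p : T.Walk s₁ s₂, t ∉ p.support := by
  revert hs s₁ s₂
  induction w with
  | nil =>
    intro hs s₁ s₂ h1 h2
    exact avoidA hT td h1 h2 (hs _ (SimpleGraph.Walk.start_mem_support _))
  | @cons a c b h w ih =>
    intro hs s₁ s₂ h1 h2
    obtain ⟨s, hsa, hsc⟩ := td.covers_edge h
    obtain ⟨p₁, hp₁⟩ := avoidA hT td h1 hsa (hs a (by simp))
    obtain ⟨p₂, hp₂⟩ := ih (fun x hx => hs x (by simp [hx])) hsc h2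
    exact ⟨p₁.append p₂, by
      rw [SimpleGraph.Walk.mem_support_append_iff]
      rintro (h' | h') <;> [exact hp₁ h'; exact hp₂ h']⟩

/-- If every node `t` carries a nonempty set `𝒞 t` of cycles fenced by `V_t` and not
contained in `G[V_t]`, then some tree edge `tt'` has cycles `C ∈ 𝒞 t`, `D ∈ 𝒞 t'`
lying in each other's branches. -/
theorem stmt_5 {V ι : Type} [Fintype ι] (G : SimpleGraph V) (T : SimpleGraph ι)
    (hT : T.IsTree) (td : TreeDecomp G T)
    (𝒞 : ι → Set (Σ v : V, G.Walk v v))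
    (hcyc : ∀ t : ι, ∀ c ∈ 𝒞 t, c.2.IsCycle)
    (hfen : ∀ t : ι, ∀ c ∈ 𝒞 t, Fenced G (td.bag t) {x | x ∈ c.2.support})
    (hnot : ∀ t : ι, ∀ c ∈ 𝒞 t, ¬ ({x | x ∈ c.2.support} ⊆ td.bag t))
    (hne : ∀ t : ι, (𝒞 t).Nonempty) :
    ∃ t t' : ι, T.Adj t t' ∧ ∃ C ∈ 𝒞 t, ∃ D ∈ 𝒞 t',
      (∀ u ∈ C.2.support, u ∉ td.bag t → InBranch T td t t' u) ∧
      (∀ u ∈ D.2.support, u ∉ td.bag t' → InBranch T td t' t u) := by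
  classical
  have key : ∀ t : ι, ∃ t' : ι, T.Adj t t' ∧ ∃ C ∈ 𝒞 t,
      ∀ u ∈ C.2.support, u ∉ td.bag t → InBranch T td t t' u := by
    intro t
    obtain ⟨C, hC⟩ := hne t
    obtain ⟨u₀, hu₀s, hu₀⟩ := Set.not_subset.mp (hnot t C hC)
    obtain ⟨s₀, hs₀⟩ := td.covers_vertex u₀
    have hts : t ≠ s₀ := fun h => hu₀ (h ▸ hs₀)
    obtain ⟨w⟩ := hT.isConnected.preconnected t s₀
    obtain ⟨t', hA, q, hq⟩ :=
      SimpleGraph.Walk.not_nil_iff.mp (SimpleGraph.Walk.not_nil_of_ne hts (p := w.toPath.1))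
    have hqt : t ∉ q.support := by
      have := w.toPath.2
      rw [hq, SimpleGraph.Walk.cons_isPath_iff] at this
      exact this.2
    refine ⟨t', hA, C, hC, fun u hu hub => ?_⟩
    obtain ⟨pw, hpw⟩ := hfen t C hC u₀ hu₀s u hu hu₀ hub
    obtain ⟨s, hsu⟩ := td.covers_vertex u
    obtain ⟨q₂, hq₂⟩ := avoidC hT td t pw hpw hs₀ hsu
    refine ⟨s, hsu, q.append q₂, ?_⟩
    rw [SimpleGraph.Walk.mem_support_append_iff]
    rintro (h' | h')
    · exact hqt h'
    · exact hq₂ h'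
  choose f hadj C hC hbr using key
  haveI : Fintype T.edgeSet := Fintype.ofFinite _
  have hcard : Fintype.card T.edgeSet < Fintype.card ι := by
    have h1 := hT.card_edgeFinset
    have h2 : T.edgeFinset.card = Fintype.card T.edgeSet := Set.toFinset_card _
    omega
  obtain ⟨t₁, t₂, hne', heq⟩ := Fintype.exists_ne_map_eq_of_card_lt
    (fun t : ι => (⟨s(t, f t), T.mem_edgeSet.mpr (hadj t)⟩ : T.edgeSet)) hcard
  have heq' : s(t₁, f t₁) = s(t₂, f t₂) := congrArg Subtype.val heq
  have hff : f (f t₁) = t₁ := by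
    rcases Sym2.eq_iff.mp heq' with ⟨h1, h2⟩ | ⟨h1, h2⟩
    · exact absurd h1 hne'
    · rw [h2, ← h1]
  have h2 := hbr (f t₁)
  rw [hff] at h2
  exact ⟨t₁, f t₁, hadj t₁, C t₁, hC t₁, C (f t₁), hC (f t₁), hbr t₁, h2⟩
end
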